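/- Soundness and completeness of H_IPL with respect to intuitionistic truth-tables: for every finite set Γ∪{φ} of intuitionistic formulas, Γ ⊢_IPL φ if and only if Γ ⊨_iPLV φ. -/
import Mathlib


/-- Intuitionistic formulas over signature Ω = {¬, →, ∨, ∧}. -/
inductive IF
  | var : ℕ → IF
  | neg : IF → IF
  | imp : IF → IF → IF
  | dis : IF → IF → IF
  | con : IF → IF → IF
deriving DecidableEq

/-- The three intuitionistic truth values F, U, T. -/
inductive VI
  | F | U | T
deriving DecidableEq

def inegOp : VI → Set VI
  | .F => {.U, .T}
  | .U => {.U, .T}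
  | .T => {.F}

def iimpOp : VI → VI → Set VI
  | .T, .T => {.T}
  | .T, _ => {.F}
  | _, .T => {.T}
  | _, _ => {.U, .T}

def idisOp : VI → VI → Set VI
  | .T, _ => {.T}
  | _, .T => {.T}
  | _, _ => {.F}

def iconOp : VI → VI → Set VI
  | .T, .T => {.T}
  | _, _ => {.F}

/-- Valuations over the Nmatrix M_IPL. -/
def IsValI (v : IF → VI) : Prop :=
  (∀ α, v (.neg α) ∈ inegOp (v α)) ∧
  (∀ α β, v (.imp α β) ∈ iimpOp (v α) (v β)) ∧
  (∀ α β, v (.dis α β) ∈ idisOp (v α) (v β)) ∧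
  (∀ α β, v (.con α β) ∈ iconOp (v α) (v β))

/-- Val₊(M_IPL): valuations taking only values T, F on propositional variables. -/
def ValPlus : Set (IF → VI) :=
  {v | IsValI v ∧ ∀ n, v (.var n) = VI.T ∨ v (.var n) = VI.F}

/-- Complexity of an intuitionistic formula. -/
def co : IF → ℕ
  | .var _ => 0
  | .neg α => co α + 1
  | .imp α β => co α + co β + 1
  | .dis α β => co α + co β + 1
  | .con α β => co α + co β + 1

/-- The levels L_k for IPL. -/
def LevelI : ℕ → Set (IF → VI)
  | 0 => ValPlus
  | (k+1) => {v ∈ LevelI k | ∀ α, co α ≤ k + 1 → v α = VI.U →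
      ∃ w ∈ LevelI k, w α = VI.F ∧ ∀ β, v β = VI.T → w β = VI.T}

/-- Intuitionistic level valuations L_IPL = ⋂_{k ≥ 0} L_k. -/
def LIPL : Set (IF → VI) := ⋂ k, LevelI k

/-- The consequence relation Γ ⊢_IPL φ of the Hilbert calculus H_IPL. -/
inductive IDeriv (Γ : Set IF) : IF → Prop
  | prem {φ : IF} : φ ∈ Γ → IDeriv Γ φ
  | ax1 (α β : IF) : IDeriv Γ (α.imp (β.imp α))
  | ax2 (α β γ : IF) : IDeriv Γ ((α.imp (β.imp γ)).imp ((α.imp β).imp (α.imp γ)))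
  | ax3 (α β : IF) : IDeriv Γ (α.imp (β.imp (α.con β)))
  | ax4 (α β : IF) : IDeriv Γ ((α.con β).imp α)
  | ax5 (α β : IF) : IDeriv Γ ((α.con β).imp β)
  | ax6 (α β : IF) : IDeriv Γ (α.imp (α.dis β))
  | ax7 (α β : IF) : IDeriv Γ (β.imp (α.dis β))
  | ax8 (α β γ : IF) : IDeriv Γ ((α.imp γ).imp ((β.imp γ).imp ((α.dis β).imp γ)))
  | ax9 (α β : IF) : IDeriv Γ ((β.imp α).imp ((β.imp α.neg).imp β.neg))
  | ax10 (α β : IF) : IDeriv Γ (α.imp (α.neg.imp β))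
  | mp {α β : IF} : IDeriv Γ (α.imp β) → IDeriv Γ α → IDeriv Γ β

/-- Δ is φ-saturated (w.r.t. ⊢_IPL). -/
def ISat (Δ : Set IF) (φ : IF) : Prop :=
  ¬ IDeriv Δ φ ∧ ∀ α ∉ Δ, IDeriv (insert α Δ) φ

open Classical in
/-- The valuation v_Δ associated to a φ-saturated set Δ in IPL. -/
noncomputable def vDeltaI (Δ : Set IF) : IF → VI
  | .var n => if IF.var n ∈ Δ then VI.T else VI.F
  | .neg α => if IF.neg α ∈ Δ then VI.T else if α ∈ Δ then VI.F else VI.U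
  | .imp α β => if IF.imp α β ∈ Δ then VI.T else if α ∈ Δ then VI.F else VI.U
  | .con α β => if α ∈ Δ ∧ β ∈ Δ then VI.T else VI.F
  | .dis α β => if α ∈ Δ ∨ β ∈ Δ then VI.T else VI.F

/-- Λ is closed under (immediate, hence all) subformulas. -/
def SubClosedI (Λ : Set IF) : Prop :=
  (∀ α, IF.neg α ∈ Λ → α ∈ Λ) ∧
  (∀ α β, IF.imp α β ∈ Λ → α ∈ Λ ∧ β ∈ Λ) ∧
  (∀ α β, IF.dis α β ∈ Λ → α ∈ Λ ∧ β ∈ Λ) ∧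
  (∀ α β, IF.con α β ∈ Λ → α ∈ Λ ∧ β ∈ Λ)

/-- Intuitionistic partial valuations with domain Λ (modelled as total functions
constrained on Λ). -/
def IsPValI (Λ : Set IF) (v : IF → VI) : Prop :=
  (∀ n, IF.var n ∈ Λ → v (.var n) = VI.T ∨ v (.var n) = VI.F) ∧
  (∀ α, IF.neg α ∈ Λ → v (.neg α) ∈ inegOp (v α)) ∧
  (∀ α β, IF.imp α β ∈ Λ → v (.imp α β) ∈ iimpOp (v α) (v β)) ∧
  (∀ α β, IF.dis α β ∈ Λ → v (.dis α β) ∈ idisOp (v α) (v β)) ∧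
  (∀ α β, IF.con α β ∈ Λ → v (.con α β) ∈ iconOp (v α) (v β))

/-- iPLV'(Λ): intuitionistic partial' level valuations over Λ. -/
def iPLV' (Λ : Set IF) : Set (IF → VI) :=
  {v | IsPValI Λ v ∧ ∀ α ∈ Λ, v α = VI.U →
    ∃ w ∈ LIPL, w α = VI.F ∧ ∀ β ∈ Λ, v β = VI.T → w β = VI.T}

/-- iPLV(Λ): intuitionistic partial level valuations over Λ, defined as the largest
subset of iPV(Λ) whose condition is witnessed inside itself. -/
def iPLV (Λ : Set IF) : Set (IF → VI) :=
  ⋃₀ {S | (∀ v ∈ S, IsPValI Λ v) ∧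
      ∀ v ∈ S, ∀ α ∈ Λ, v α = VI.U →
        ∃ w ∈ S, w α = VI.F ∧ ∀ β ∈ Λ, v β = VI.T → w β = VI.T}

/-- Set of subformulas of an intuitionistic formula. -/
def IF.subf : IF → Finset IF
  | .var n => {.var n}
  | .neg α => insert (.neg α) α.subf
  | .imp α β => insert (.imp α β) (α.subf ∪ β.subf)
  | .dis α β => insert (.dis α β) (α.subf ∪ β.subf)
  | .con α β => insert (.con α β) (α.subf ∪ β.subf)

/-- Γ ⊨_iPLV φ : consequence w.r.t. the intuitionistic truth tables, over the set Λ
of subformulas of Γ ∪ {φ}. -/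
def iPLVConseq (Γ : Finset IF) (φ : IF) : Prop :=
  ∀ v ∈ iPLV (↑(Γ.biUnion IF.subf ∪ φ.subf) : Set IF),
    (∀ β ∈ Γ, v β = VI.T) → v φ = VI.T

namespace IPLAux

theorem ideriv_mono {Γ Γ' : Set IF} (h : Γ ⊆ Γ') {φ : IF} (hd : IDeriv Γ φ) :
    IDeriv Γ' φ := by
  induction hd with
  | prem hp => exact IDeriv.prem (h hp)
  | ax1 α β => exact IDeriv.ax1 α β
  | ax2 α β γ => exact IDeriv.ax2 α β γ
  | ax3 α β => exact IDeriv.ax3 α β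
  | ax4 α β => exact IDeriv.ax4 α β
  | ax5 α β => exact IDeriv.ax5 α β
  | ax6 α β => exact IDeriv.ax6 α β
  | ax7 α β => exact IDeriv.ax7 α β
  | ax8 α β γ => exact IDeriv.ax8 α β γ
  | ax9 α β => exact IDeriv.ax9 α β
  | ax10 α β => exact IDeriv.ax10 α β
  | mp _ _ ih1 ih2 => exact IDeriv.mp ih1 ih2

theorem ideriv_id (Γ : Set IF) (α : IF) : IDeriv Γ (α.imp α) := by
  have h1 := IDeriv.ax2 (Γ := Γ) α (α.imp α) α
  have h2 := IDeriv.ax1 (Γ := Γ) α (α.imp α)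
  have h3 := IDeriv.ax1 (Γ := Γ) α α
  exact (h1.mp h2).mp h3

theorem deduction {Γ : Set IF} {α β : IF} (h : IDeriv (insert α Γ) β) :
    IDeriv Γ (α.imp β) := by
  induction h with
  | @prem φ hp =>
    rw [Set.mem_insert_iff] at hp
    rcases hp with rfl | h
    · exact ideriv_id Γ _
    · exact (IDeriv.ax1 φ α).mp (IDeriv.prem h)
  | ax1 a b => exact (IDeriv.ax1 _ α).mp (IDeriv.ax1 a b)
  | ax2 a b c => exact (IDeriv.ax1 _ α).mp (IDeriv.ax2 a b c)
  | ax3 a b => exact (IDeriv.ax1 _ α).mp (IDeriv.ax3 a b)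
  | ax4 a b => exact (IDeriv.ax1 _ α).mp (IDeriv.ax4 a b)
  | ax5 a b => exact (IDeriv.ax1 _ α).mp (IDeriv.ax5 a b)
  | ax6 a b => exact (IDeriv.ax1 _ α).mp (IDeriv.ax6 a b)
  | ax7 a b => exact (IDeriv.ax1 _ α).mp (IDeriv.ax7 a b)
  | ax8 a b c => exact (IDeriv.ax1 _ α).mp (IDeriv.ax8 a b c)
  | ax9 a b => exact (IDeriv.ax1 _ α).mp (IDeriv.ax9 a b)
  | ax10 a b => exact (IDeriv.ax1 _ α).mp (IDeriv.ax10 a b)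
  | @mp a b _ _ ih1 ih2 => exact ((IDeriv.ax2 α a b).mp ih1).mp ih2

theorem ideriv_finitary {Γ : Set IF} {φ : IF} (h : IDeriv Γ φ) :
    ∃ Γ₀ : Finset IF, ↑Γ₀ ⊆ Γ ∧ IDeriv (↑Γ₀ : Set IF) φ := by
  induction h with
  | @prem φ hp =>
    exact ⟨{φ}, by simpa using hp, IDeriv.prem (by simp)⟩
  | ax1 a b => exact ⟨∅, by simp, IDeriv.ax1 a b⟩
  | ax2 a b c => exact ⟨∅, by simp, IDeriv.ax2 a b c⟩
  | ax3 a b => exact ⟨∅, by simp, IDeriv.ax3 a b⟩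
  | ax4 a b => exact ⟨∅, by simp, IDeriv.ax4 a b⟩
  | ax5 a b => exact ⟨∅, by simp, IDeriv.ax5 a b⟩
  | ax6 a b => exact ⟨∅, by simp, IDeriv.ax6 a b⟩
  | ax7 a b => exact ⟨∅, by simp, IDeriv.ax7 a b⟩
  | ax8 a b c => exact ⟨∅, by simp, IDeriv.ax8 a b c⟩
  | ax9 a b => exact ⟨∅, by simp, IDeriv.ax9 a b⟩
  | ax10 a b => exact ⟨∅, by simp, IDeriv.ax10 a b⟩
  | mp _ _ ih1 ih2 =>
    obtain ⟨A, hA, dA⟩ := ih1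
    obtain ⟨B, hB, dB⟩ := ih2
    refine ⟨A ∪ B, ?_, ?_⟩
    · intro x hx
      simp only [Finset.coe_union, Set.mem_union] at hx
      exact hx.elim (fun h => hA h) (fun h => hB h)
    · have h1 : IDeriv (↑(A ∪ B) : Set IF) _ :=
        ideriv_mono (by simp [Finset.coe_union]) dA
      have h2 := ideriv_mono (Γ := (↑B : Set IF)) (Γ' := ↑(A ∪ B))
        (by simp [Finset.coe_union]) dB
      exact h1.mp h2

theorem finset_subset_chain_mem {c : Set (Set IF)} (hchain : IsChain (· ⊆ ·) c)
    {Θ₀ : Set IF} (hΘ₀ : Θ₀ ∈ c) (Γ₀ : Finset IF) :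
    ↑Γ₀ ⊆ ⋃₀ c → ∃ Θ ∈ c, (↑Γ₀ : Set IF) ⊆ Θ := by
  classical
  induction Γ₀ using Finset.induction_on with
  | empty => exact fun _ => ⟨Θ₀, hΘ₀, by simp⟩
  | @insert a s ha ih =>
    intro hins
    obtain ⟨Θ₁, hΘ₁c, hΘ₁⟩ := ih (fun x hx => hins (by simp at hx ⊢; tauto))
    have haU : a ∈ ⋃₀ c := hins (by simp)
    obtain ⟨Θ₂, hΘ₂c, haΘ₂⟩ := haU
    rcases hchain.total hΘ₁c hΘ₂c with h12 | h21
    · refine ⟨Θ₂, hΘ₂c, fun x hx => ?_⟩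
      simp at hx
      rcases hx with rfl | hx
      · exact haΘ₂
      · exact h12 (hΘ₁ hx)
    · refine ⟨Θ₁, hΘ₁c, fun x hx => ?_⟩
      simp at hx
      rcases hx with rfl | hx
      · exact h21 haΘ₂
      · exact hΘ₁ hx

theorem lindenbaum {Δ : Set IF} {ψ : IF} (h : ¬ IDeriv Δ ψ) :
    ∃ Δ', Δ ⊆ Δ' ∧ ISat Δ' ψ := by
  obtain ⟨Δ', hsub, hmax⟩ := zorn_subset_nonempty {Θ | ¬ IDeriv Θ ψ}
    (fun c hc hchain ⟨Θ₀, hΘ₀⟩ => by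
      refine ⟨⋃₀ c, fun hd => ?_, fun Θ hΘ => Set.subset_sUnion_of_mem hΘ⟩
      obtain ⟨Γ₀, hΓ₀, dΓ₀⟩ := ideriv_finitary hd
      obtain ⟨Θ, hΘc, hΘ⟩ := finset_subset_chain_mem hchain hΘ₀ Γ₀ hΓ₀
      exact hc hΘc (ideriv_mono hΘ dΓ₀)) Δ h
  refine ⟨Δ', hsub, hmax.prop, fun α hα => ?_⟩
  by_contra hno
  exact hα (hmax.2 hno (Set.subset_insert α Δ') (Set.mem_insert α Δ'))

theorem isat_closed {Δ : Set IF} {ψ α : IF} (h : ISat Δ ψ) (hd : IDeriv Δ α) :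
    α ∈ Δ := by
  by_contra hno
  exact h.1 ((deduction (h.2 α hno)).mp hd)

theorem isat_not_both {Δ : Set IF} {ψ α : IF} (h : ISat Δ ψ)
    (h1 : α ∈ Δ) (h2 : α.neg ∈ Δ) : False :=
  h.1 (((IDeriv.ax10 α ψ).mp (IDeriv.prem h1)).mp (IDeriv.prem h2))

end IPLAux
namespace IPLAux

variable {Δ : Set IF} {ψ : IF}

theorem mem_con (h : ISat Δ ψ) {α β : IF} :
    (IF.con α β) ∈ Δ ↔ α ∈ Δ ∧ β ∈ Δ := by
  constructor
  · intro hm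
    exact ⟨isat_closed h ((IDeriv.ax4 α β).mp (IDeriv.prem hm)),
      isat_closed h ((IDeriv.ax5 α β).mp (IDeriv.prem hm))⟩
  · rintro ⟨h1, h2⟩
    exact isat_closed h (((IDeriv.ax3 α β).mp (IDeriv.prem h1)).mp (IDeriv.prem h2))

theorem mem_dis (h : ISat Δ ψ) {α β : IF} :
    (IF.dis α β) ∈ Δ ↔ α ∈ Δ ∨ β ∈ Δ := by
  constructor
  · intro hm
    by_contra hno
    push_neg at hno
    have d1 : IDeriv Δ (α.imp ψ) := deduction (h.2 α hno.1)
    have d2 : IDeriv Δ (β.imp ψ) := deduction (h.2 β hno.2)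
    exact h.1 ((((IDeriv.ax8 α β ψ).mp d1).mp d2).mp (IDeriv.prem hm))
  · rintro (h1 | h1)
    · exact isat_closed h ((IDeriv.ax6 α β).mp (IDeriv.prem h1))
    · exact isat_closed h ((IDeriv.ax7 α β).mp (IDeriv.prem h1))

theorem vD_T (h : ISat Δ ψ) (α : IF) : vDeltaI Δ α = VI.T ↔ α ∈ Δ := by
  cases α with
  | var n => simp only [vDeltaI]; split_ifs with h1 <;> simp [h1]
  | neg α => simp only [vDeltaI]; split_ifs with h1 h2 <;> simp_all
  | imp α β => simp only [vDeltaI]; split_ifs with h1 h2 <;> simp_all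
  | dis α β =>
    simp only [vDeltaI]; rw [mem_dis h]; split_ifs with h1 <;> simp [h1]
  | con α β =>
    simp only [vDeltaI]; rw [mem_con h]; split_ifs with h1 <;> simp [h1]

theorem vD_pval (h : ISat Δ ψ) (Λ : Set IF) : IsPValI Λ (vDeltaI Δ) := by
  refine ⟨fun n _ => ?_, fun α _ => ?_, fun α β _ => ?_, fun α β _ => ?_,
    fun α β _ => ?_⟩
  · simp only [vDeltaI]; split_ifs <;> simp
  · -- neg
    by_cases h1 : IF.neg α ∈ Δ
    · have hne : α ∉ Δ := fun hα => isat_not_both h hα h1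
      have hT : vDeltaI Δ (IF.neg α) = VI.T := by simp [vDeltaI, h1]
      rw [hT]
      cases hv : vDeltaI Δ α with
      | F => simp [inegOp]
      | U => simp [inegOp]
      | T => exact absurd ((vD_T h α).mp hv) hne
    · by_cases h2 : α ∈ Δ
      · have hF : vDeltaI Δ (IF.neg α) = VI.F := by simp [vDeltaI, h1, h2]
        have : vDeltaI Δ α = VI.T := (vD_T h α).mpr h2
        rw [hF, this]; simp [inegOp]
      · have hUv : vDeltaI Δ (IF.neg α) = VI.U := by simp [vDeltaI, h1, h2]
        rw [hUv]
        cases hv : vDeltaI Δ α with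
        | F => simp [inegOp]
        | U => simp [inegOp]
        | T => exact absurd ((vD_T h α).mp hv) h2
  · -- imp
    by_cases h1 : IF.imp α β ∈ Δ
    · have hT : vDeltaI Δ (IF.imp α β) = VI.T := by simp [vDeltaI, h1]
      rw [hT]
      by_cases h2 : α ∈ Δ
      · have hβ : β ∈ Δ := isat_closed h ((IDeriv.prem h1).mp (IDeriv.prem h2))
        rw [(vD_T h α).mpr h2, (vD_T h β).mpr hβ]; simp [iimpOp]
      · have hα : vDeltaI Δ α ≠ VI.T := fun hv => h2 ((vD_T h α).mp hv)
        cases hv : vDeltaI Δ α with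
        | T => exact absurd hv hα
        | F => cases hvb : vDeltaI Δ β <;> simp [iimpOp]
        | U => cases hvb : vDeltaI Δ β <;> simp [iimpOp]
    · have hnb : β ∉ Δ := fun hβ =>
        h1 (isat_closed h ((IDeriv.ax1 β α).mp (IDeriv.prem hβ)))
      have hvb : vDeltaI Δ β ≠ VI.T := fun hv => hnb ((vD_T h β).mp hv)
      by_cases h2 : α ∈ Δ
      · have hF : vDeltaI Δ (IF.imp α β) = VI.F := by simp [vDeltaI, h1, h2]
        rw [hF, (vD_T h α).mpr h2]
        cases hv : vDeltaI Δ β with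
        | T => exact absurd hv hvb
        | F => simp [iimpOp]
        | U => simp [iimpOp]
      · have hUv : vDeltaI Δ (IF.imp α β) = VI.U := by simp [vDeltaI, h1, h2]
        rw [hUv]
        have hva : vDeltaI Δ α ≠ VI.T := fun hv => h2 ((vD_T h α).mp hv)
        cases hv : vDeltaI Δ α with
        | T => exact absurd hv hva
        | F =>
          cases hv' : vDeltaI Δ β with
          | T => exact absurd hv' hvb
          | F => simp [iimpOp]
          | U => simp [iimpOp]
        | U =>
          cases hv' : vDeltaI Δ β with
          | T => exact absurd hv' hvb
          | F => simp [iimpOp]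
          | U => simp [iimpOp]
  · -- dis
    by_cases h1 : α ∈ Δ ∨ β ∈ Δ
    · have hT : vDeltaI Δ (IF.dis α β) = VI.T := by simp [vDeltaI, h1]
      rw [hT]
      rcases h1 with h1 | h1
      · rw [(vD_T h α).mpr h1]; simp [idisOp]
      · rw [(vD_T h β).mpr h1]
        cases hv : vDeltaI Δ α <;> simp [idisOp]
    · push_neg at h1
      have hF : vDeltaI Δ (IF.dis α β) = VI.F := by
        simp [vDeltaI, h1.1, h1.2]
      rw [hF]
      have hva : vDeltaI Δ α ≠ VI.T := fun hv => h1.1 ((vD_T h α).mp hv)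
      have hvb : vDeltaI Δ β ≠ VI.T := fun hv => h1.2 ((vD_T h β).mp hv)
      cases hv : vDeltaI Δ α with
      | T => exact absurd hv hva
      | F => cases hv' : vDeltaI Δ β with
        | T => exact absurd hv' hvb
        | F => simp [idisOp]
        | U => simp [idisOp]
      | U => cases hv' : vDeltaI Δ β with
        | T => exact absurd hv' hvb
        | F => simp [idisOp]
        | U => simp [idisOp]
  · -- con
    by_cases h1 : α ∈ Δ ∧ β ∈ Δ
    · have hT : vDeltaI Δ (IF.con α β) = VI.T := by simp [vDeltaI, h1]
      rw [hT, (vD_T h α).mpr h1.1, (vD_T h β).mpr h1.2]; simp [iconOp]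
    · have hF : vDeltaI Δ (IF.con α β) = VI.F := by simp [vDeltaI, h1]
      rw [hF]
      have : vDeltaI Δ α ≠ VI.T ∨ vDeltaI Δ β ≠ VI.T := by
        by_contra hc
        push_neg at hc
        exact h1 ⟨(vD_T h α).mp hc.1, (vD_T h β).mp hc.2⟩
      cases hv : vDeltaI Δ α <;> cases hv' : vDeltaI Δ β <;>
        simp [iconOp] <;> rw [hv, hv'] at this <;> simp at this

theorem vD_U_witness (h : ISat Δ ψ) (α : IF) (hU : vDeltaI Δ α = VI.U) :
    ∃ Δ' ψ', Δ ⊆ Δ' ∧ ISat Δ' ψ' ∧ vDeltaI Δ' α = VI.F := by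
  cases α with
  | var n => simp only [vDeltaI] at hU; split_ifs at hU <;> simp_all
  | dis α β => simp only [vDeltaI] at hU; split_ifs at hU <;> simp_all
  | con α β => simp only [vDeltaI] at hU; split_ifs at hU <;> simp_all
  | neg γ =>
    have hng : IF.neg γ ∉ Δ := by
      intro hm; simp [vDeltaI, hm] at hU
    have hg : γ ∉ Δ := by
      intro hm; simp [vDeltaI, hng, hm] at hU
    have hnd : ¬ IDeriv (insert γ Δ) ((γ.imp γ).neg) := by
      intro hd
      have h1 : IDeriv Δ (γ.imp (γ.imp γ).neg) := deduction hd
      have h2 : IDeriv Δ (γ.imp (γ.imp γ)) := IDeriv.ax1 γ γ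
      have h3 : IDeriv Δ γ.neg := ((IDeriv.ax9 (γ.imp γ) γ).mp h2).mp h1
      exact hng (isat_closed h h3)
    obtain ⟨Δ', hsub', hsat'⟩ := lindenbaum hnd
    have hγΔ' : γ ∈ Δ' := hsub' (Set.mem_insert γ Δ)
    have hngΔ' : IF.neg γ ∉ Δ' := fun hm =>
      hsat'.1 (((IDeriv.ax10 γ ((γ.imp γ).neg)).mp
        (IDeriv.prem hγΔ')).mp (IDeriv.prem hm))
    exact ⟨Δ', _, (Set.subset_insert γ Δ).trans hsub', hsat',
      by simp [vDeltaI, hngΔ', hγΔ']⟩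
  | imp γ δ =>
    have hni : IF.imp γ δ ∉ Δ := by
      intro hm; simp [vDeltaI, hm] at hU
    have hg : γ ∉ Δ := by
      intro hm; simp [vDeltaI, hni, hm] at hU
    have hnd : ¬ IDeriv (insert γ Δ) δ := fun hd => hni (isat_closed h (deduction hd))
    obtain ⟨Δ', hsub', hsat'⟩ := lindenbaum hnd
    have hγΔ' : γ ∈ Δ' := hsub' (Set.mem_insert γ Δ)
    have hniΔ' : IF.imp γ δ ∉ Δ' := fun hm =>
      hsat'.1 ((IDeriv.prem hm).mp (IDeriv.prem hγΔ'))
    exact ⟨Δ', _, (Set.subset_insert γ Δ).trans hsub', hsat',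
      by simp [vDeltaI, hniΔ', hγΔ']⟩

/-- The set of all valuations arising from saturated sets. -/
def SSat : Set (IF → VI) := {v | ∃ Δ ψ, ISat Δ ψ ∧ v = vDeltaI Δ}

theorem SSat_good (Λ : Set IF) :
    (∀ v ∈ SSat, IsPValI Λ v) ∧
    ∀ v ∈ SSat, ∀ α ∈ Λ, v α = VI.U →
      ∃ w ∈ SSat, w α = VI.F ∧ ∀ β ∈ Λ, v β = VI.T → w β = VI.T := by
  constructor
  · rintro v ⟨Δ, ψ, hsat, rfl⟩
    exact vD_pval hsat Λ
  · rintro v ⟨Δ, ψ, hsat, rfl⟩ α _ hU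
    obtain ⟨Δ', ψ', hsub, hsat', hF⟩ := vD_U_witness hsat α hU
    refine ⟨vDeltaI Δ', ⟨Δ', ψ', hsat', rfl⟩, hF, fun β _ hT => ?_⟩
    exact (vD_T hsat' β).mpr (hsub ((vD_T hsat β).mp hT))

end IPLAux
namespace IPLAux

def Le (Λ : Set IF) (v w : IF → VI) : Prop :=
  ∀ β ∈ Λ, v β = VI.T → w β = VI.T

theorem Le.refl (Λ : Set IF) (v : IF → VI) : Le Λ v v := fun _ _ h => h

theorem Le.trans {Λ : Set IF} {u v w : IF → VI}
    (h1 : Le Λ u v) (h2 : Le Λ v w) : Le Λ u w :=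
  fun β hβ h => h2 β hβ (h1 β hβ h)

def Force (S : Set (IF → VI)) (Λ : Set IF) : IF → (IF → VI) → Prop
  | .var n => fun v => IF.var n ∈ Λ ∧ v (.var n) = VI.T
  | .neg α => fun v => ∀ w ∈ S, Le Λ v w → ¬ Force S Λ α w
  | .imp α β => fun v => ∀ w ∈ S, Le Λ v w → Force S Λ α w → Force S Λ β w
  | .dis α β => fun v => Force S Λ α v ∨ Force S Λ β v
  | .con α β => fun v => Force S Λ α v ∧ Force S Λ β v

theorem force_mono {S : Set (IF → VI)} {Λ : Set IF} :
    ∀ (φ : IF) {v w : IF → VI}, Le Λ v w → Force S Λ φ v → Force S Λ φ w := by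
  intro φ
  induction φ with
  | var n => intro v w hle hf; exact ⟨hf.1, hle _ hf.1 hf.2⟩
  | neg α ih => intro v w hle hf u hu hle'; exact hf u hu (hle.trans hle')
  | imp α β ih1 ih2 =>
    intro v w hle hf u hu hle' hα; exact hf u hu (hle.trans hle') hα
  | dis α β ih1 ih2 =>
    intro v w hle hf; exact hf.imp (ih1 hle) (ih2 hle)
  | con α β ih1 ih2 =>
    intro v w hle hf; exact ⟨ih1 hle hf.1, ih2 hle hf.2⟩

theorem force_sound {S : Set (IF → VI)} {Λ : Set IF} {Γ : Set IF} {φ : IF}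
    (hd : IDeriv Γ φ) :
    ∀ v ∈ S, (∀ β ∈ Γ, Force S Λ β v) → Force S Λ φ v := by
  induction hd with
  | prem hp => intro v _ hΓ; exact hΓ _ hp
  | ax1 α β =>
    intro v _ _ w hw hle hα u hu hle' _
    exact force_mono α hle' hα
  | ax2 α β γ =>
    intro v _ _ w hw hle h1 u hu hle' h2 t ht hle'' h3
    exact h1 t ht (hle'.trans hle'') h3 t ht (Le.refl Λ t)
      (h2 t ht hle'' h3)
  | ax3 α β =>
    intro v _ _ w hw hle hα u hu hle' hβ
    exact ⟨force_mono α hle' hα, hβ⟩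
  | ax4 α β => intro v _ _ w hw hle hc; exact hc.1
  | ax5 α β => intro v _ _ w hw hle hc; exact hc.2
  | ax6 α β => intro v _ _ w hw hle hα; exact Or.inl hα
  | ax7 α β => intro v _ _ w hw hle hβ; exact Or.inr hβ
  | ax8 α β γ =>
    intro v _ _ w hw hle h1 u hu hle' h2 t ht hle'' h3
    rcases h3 with h3 | h3
    · exact h1 t ht (hle'.trans hle'') h3
    · exact h2 t ht hle'' h3
  | ax9 α β =>
    intro v _ _ w hw hle h1 u hu hle' h2 t ht hle'' h3
    have hα := h1 t ht (hle'.trans hle'') h3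
    have hnα := h2 t ht hle'' h3
    exact hnα t ht (Le.refl Λ t) hα
  | ax10 α β =>
    intro v _ _ w hw hle hα u hu hle' hnα
    exact absurd (force_mono α hle' hα) (hnα u hu (Le.refl Λ u))
  | mp _ _ ih1 ih2 =>
    intro v hv hΓ
    exact ih1 v hv hΓ v hv (Le.refl Λ v) (ih2 v hv hΓ)

/-- The truth lemma for self-witnessing sets of partial valuations. -/
theorem truth_lemma {S : Set (IF → VI)} {Λ : Set IF}
    (hΛ : SubClosedI Λ)
    (hval : ∀ v ∈ S, IsPValI Λ v)
    (hwit : ∀ v ∈ S, ∀ α ∈ Λ, v α = VI.U →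
      ∃ w ∈ S, w α = VI.F ∧ ∀ β ∈ Λ, v β = VI.T → w β = VI.T) :
    ∀ (α : IF), α ∈ Λ → ∀ v ∈ S, (v α = VI.T ↔ Force S Λ α v) := by
  intro α
  induction α with
  | var n =>
    intro hmem v hv
    exact ⟨fun h => ⟨hmem, h⟩, fun h => h.2⟩
  | neg α ih =>
    intro hmem v hv
    have hα : α ∈ Λ := hΛ.1 α hmem
    constructor
    · intro hT w hw hle hforce
      have hwT : w (IF.neg α) = VI.T := hle _ hmem hT
      have := (hval w hw).2.1 α hmem
      rw [hwT] at this
      have hwa : w α ≠ VI.T := by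
        intro hwa; rw [hwa] at this; simp [inegOp] at this
      exact hwa (((ih hα w hw).mpr hforce))
    · intro hf
      by_contra hne
      have hmemop := (hval v hv).2.1 α hmem
      cases hv' : v (IF.neg α) with
      | T => exact hne hv'
      | F =>
        rw [hv'] at hmemop
        have hva : v α = VI.T := by
          cases hva : v α <;> rw [hva] at hmemop <;> simp [inegOp] at hmemop
        exact hf v hv (Le.refl Λ v) ((ih hα v hv).mp hva)
      | U =>
        obtain ⟨w, hw, hwF, hle⟩ := hwit v hv _ hmem hv'
        have hmw := (hval w hw).2.1 α hmem
        rw [hwF] at hmw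
        have hwa : w α = VI.T := by
          cases hwa : w α <;> rw [hwa] at hmw <;> simp [inegOp] at hmw
        exact hf w hw hle ((ih hα w hw).mp hwa)
  | imp α β ih1 ih2 =>
    intro hmem v hv
    have hα : α ∈ Λ := (hΛ.2.1 α β hmem).1
    have hβ : β ∈ Λ := (hΛ.2.1 α β hmem).2
    constructor
    · intro hT w hw hle hfα
      have hwT : w (IF.imp α β) = VI.T := hle _ hmem hT
      have hmw := (hval w hw).2.2.1 α β hmem
      rw [hwT] at hmw
      have hwa : w α = VI.T := (ih1 hα w hw).mpr hfα
      rw [hwa] at hmw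
      have hwb : w β = VI.T := by
        cases hwb : w β <;> rw [hwb] at hmw <;> simp [iimpOp] at hmw
      exact (ih2 hβ w hw).mp hwb
    · intro hf
      by_contra hne
      cases hv' : v (IF.imp α β) with
      | T => exact hne hv'
      | F =>
        have hmv := (hval v hv).2.2.1 α β hmem
        rw [hv'] at hmv
        have hva : v α = VI.T ∧ v β ≠ VI.T := by
          cases hva : v α <;> cases hvb : v β <;>
            rw [hva, hvb] at hmv <;> simp [iimpOp] at hmv
          all_goals exact ⟨rfl, by simp⟩
        have := hf v hv (Le.refl Λ v) ((ih1 hα v hv).mp hva.1)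
        exact hva.2 ((ih2 hβ v hv).mpr this)
      | U =>
        obtain ⟨w, hw, hwF, hle⟩ := hwit v hv _ hmem hv'
        have hmw := (hval w hw).2.2.1 α β hmem
        rw [hwF] at hmw
        have hwa : w α = VI.T ∧ w β ≠ VI.T := by
          cases hwa : w α <;> cases hwb : w β <;>
            rw [hwa, hwb] at hmw <;> simp [iimpOp] at hmw
          all_goals exact ⟨rfl, by simp⟩
        have := hf w hw hle ((ih1 hα w hw).mp hwa.1)
        exact hwa.2 ((ih2 hβ w hw).mpr this)
  | dis α β ih1 ih2 =>
    intro hmem v hv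
    have hα : α ∈ Λ := (hΛ.2.2.1 α β hmem).1
    have hβ : β ∈ Λ := (hΛ.2.2.1 α β hmem).2
    have hmv := (hval v hv).2.2.2.1 α β hmem
    constructor
    · intro hT
      rw [hT] at hmv
      have : v α = VI.T ∨ v β = VI.T := by
        cases hva : v α <;> cases hvb : v β <;>
          rw [hva, hvb] at hmv <;> simp [idisOp] at hmv <;> simp
      exact this.imp (fun h => (ih1 hα v hv).mp h) (fun h => (ih2 hβ v hv).mp h)
    · intro hf
      rcases hf with hf | hf
      · have := (ih1 hα v hv).mpr hf
        rw [this] at hmv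
        simpa [idisOp] using hmv
      · have := (ih2 hβ v hv).mpr hf
        rw [this] at hmv
        cases hva : v α <;> rw [hva] at hmv <;> simpa [idisOp] using hmv
  | con α β ih1 ih2 =>
    intro hmem v hv
    have hα : α ∈ Λ := (hΛ.2.2.2 α β hmem).1
    have hβ : β ∈ Λ := (hΛ.2.2.2 α β hmem).2
    have hmv := (hval v hv).2.2.2.2 α β hmem
    constructor
    · intro hT
      rw [hT] at hmv
      have : v α = VI.T ∧ v β = VI.T := by
        cases hva : v α <;> cases hvb : v β <;>
          rw [hva, hvb] at hmv <;> simp [iconOp] at hmv <;> simp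
      exact ⟨(ih1 hα v hv).mp this.1, (ih2 hβ v hv).mp this.2⟩
    · intro hf
      have h1 := (ih1 hα v hv).mpr hf.1
      have h2 := (ih2 hβ v hv).mpr hf.2
      rw [h1, h2] at hmv
      simpa [iconOp] using hmv

end IPLAux
namespace IPLAux

theorem self_mem_subf (α : IF) : α ∈ α.subf := by
  cases α <;> simp [IF.subf]

theorem subf_trans : ∀ (γ α β : IF), α ∈ γ.subf → β ∈ α.subf → β ∈ γ.subf := by
  intro γ
  induction γ with
  | var n =>
    intro α β hα hβ
    simp [IF.subf] at hα
    subst hα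
    exact hβ
  | neg δ ih =>
    intro α β hα hβ
    simp only [IF.subf, Finset.mem_insert] at hα ⊢
    rcases hα with rfl | hα
    · simp only [IF.subf, Finset.mem_insert] at hβ
      rcases hβ with rfl | hβ
      · exact Or.inl rfl
      · exact Or.inr hβ
    · exact Or.inr (ih α β hα hβ)
  | imp δ ε ih1 ih2 =>
    intro α β hα hβ
    simp only [IF.subf, Finset.mem_insert, Finset.mem_union] at hα ⊢
    rcases hα with rfl | hα | hα
    · simp only [IF.subf, Finset.mem_insert, Finset.mem_union] at hβ
      exact hβ
    · exact Or.inr (Or.inl (ih1 α β hα hβ))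
    · exact Or.inr (Or.inr (ih2 α β hα hβ))
  | dis δ ε ih1 ih2 =>
    intro α β hα hβ
    simp only [IF.subf, Finset.mem_insert, Finset.mem_union] at hα ⊢
    rcases hα with rfl | hα | hα
    · simp only [IF.subf, Finset.mem_insert, Finset.mem_union] at hβ
      exact hβ
    · exact Or.inr (Or.inl (ih1 α β hα hβ))
    · exact Or.inr (Or.inr (ih2 α β hα hβ))
  | con δ ε ih1 ih2 =>
    intro α β hα hβ
    simp only [IF.subf, Finset.mem_insert, Finset.mem_union] at hα ⊢
    rcases hα with rfl | hα | hα
    · simp only [IF.subf, Finset.mem_insert, Finset.mem_union] at hβ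
      exact hβ
    · exact Or.inr (Or.inl (ih1 α β hα hβ))
    · exact Or.inr (Or.inr (ih2 α β hα hβ))

theorem lam_closed (Γ : Finset IF) (φ : IF) :
    SubClosedI (↑(Γ.biUnion IF.subf ∪ φ.subf) : Set IF) := by
  have key : ∀ (ξ ζ : IF), ζ ∈ ξ.subf →
      ξ ∈ (↑(Γ.biUnion IF.subf ∪ φ.subf) : Set IF) →
      ζ ∈ (↑(Γ.biUnion IF.subf ∪ φ.subf) : Set IF) := by
    intro ξ ζ hζ hξ
    simp only [Finset.coe_union, Set.mem_union, Finset.mem_coe,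
      Finset.mem_biUnion] at hξ ⊢
    rcases hξ with ⟨γ, hγ, hξγ⟩ | hξφ
    · exact Or.inl ⟨γ, hγ, subf_trans γ ξ ζ hξγ hζ⟩
    · exact Or.inr (subf_trans φ ξ ζ hξφ hζ)
  refine ⟨fun α h => ?_, fun α β h => ?_, fun α β h => ?_, fun α β h => ?_⟩
  · exact key _ _ (by simp [IF.subf, self_mem_subf]) h
  · exact ⟨key _ _ (by simp [IF.subf, self_mem_subf]) h,
      key _ _ (by simp [IF.subf, self_mem_subf]) h⟩
  · exact ⟨key _ _ (by simp [IF.subf, self_mem_subf]) h,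
      key _ _ (by simp [IF.subf, self_mem_subf]) h⟩
  · exact ⟨key _ _ (by simp [IF.subf, self_mem_subf]) h,
      key _ _ (by simp [IF.subf, self_mem_subf]) h⟩

end IPLAux

open IPLAux in
/-- Soundness and completeness of H_IPL w.r.t. the intuitionistic
truth-tables, for finite Γ ∪ {φ}. -/
theorem ipl_calculus_iff_tables (Γ : Finset IF) (φ : IF) :
    IDeriv (↑Γ : Set IF) φ ↔ iPLVConseq Γ φ := by
  set Λ : Set IF := (↑(Γ.biUnion IF.subf ∪ φ.subf) : Set IF) with hΛdef
  have hΛ : SubClosedI Λ := lam_closed Γ φ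
  have hφΛ : φ ∈ Λ := by
    simp only [hΛdef, Finset.coe_union, Set.mem_union, Finset.mem_coe]
    exact Or.inr (self_mem_subf φ)
  have hΓΛ : ∀ β ∈ Γ, β ∈ Λ := by
    intro β hβ
    simp only [hΛdef, Finset.coe_union, Set.mem_union, Finset.mem_coe,
      Finset.mem_biUnion]
    exact Or.inl ⟨β, hβ, self_mem_subf β⟩
  constructor
  · -- soundness
    intro hd v hv hΓT
    obtain ⟨S, ⟨hval, hwit⟩, hvS⟩ := hv
    have tl := truth_lemma hΛ hval hwit
    have hforce : Force S Λ φ v := by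
      refine force_sound hd v hvS ?_
      intro β hβ
      exact (tl β (hΓΛ β hβ) v hvS).mp (hΓT β hβ)
    exact (tl φ hφΛ v hvS).mpr hforce
  · -- completeness
    intro hc
    by_contra hnd
    obtain ⟨Δ, hsub, hsat⟩ := lindenbaum hnd
    have hvmem : vDeltaI Δ ∈ iPLV Λ := by
      refine ⟨SSat, ?_, ⟨Δ, φ, hsat, rfl⟩⟩
      exact SSat_good Λ
    have hT : vDeltaI Δ φ = VI.T :=
      hc (vDeltaI Δ) hvmem (fun β hβ => (vD_T hsat β).mpr (hsub hβ))
    exact hsat.1 (IDeriv.prem ((vD_T hsat φ).mp hT))
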